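/- Suppose unconfoundedness holds at every t ∈ {0,…,J}, and let π_1,…,π_J be positive reals. Then the conditional contrast τ := E[Y | A ∩ {D = 1}] − E[Y | A ∩ {D = 0}] decomposes exactly as τ = rATE + Δ, where rATE := Σ_{t=1}^J (π_t / Σ_{s=1}^J π_s)·(m_t − m_0) and Δ := Σ_{t=1}^J ( e_t / Σ_{s=1}^J e_s − π_t / Σ_{s=1}^J π_s )·(m_t − m_0). -/

import Mathlib

/-!
Since `Y = Y_T`, the conditional mean of `Y` on `A ∩ {D = 1}` is the average of the arm means
`E[Y_t | A ∩ {T = t}]`, `t ≥ 1`, weighted by `P(T = t | A)` renormalised over `t ≥ 1`, i.e. by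
`e_t / Σ e_s`. Unconfoundedness replaces each arm mean by `m_t`, so the contrast equals
`Σ_{t ≥ 1} (e_t / Σ e_s) (m_t - m_0)`. The reference weights `π_t / Σ π_s` enter `rATE` and `Δ`
with opposite signs and cancel.
-/

open MeasureTheory ProbabilityTheory

section
variable {Ω ι E : Type*} [MeasurableSpace Ω] {μ : Measure Ω} [NormedAddCommGroup E]

theorem MeasureTheory.Integrable.cond {f : Ω → E} (hf : Integrable f μ) (s : Set Ω) :
    Integrable f μ[|s] := by
  by_cases hs : μ s = 0
  · simp [cond_eq_zero_of_meas_eq_zero hs]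
  · exact hf.restrict.smul_measure (ENNReal.inv_ne_top.mpr hs)

variable [NormedSpace ℝ E]

theorem setIntegral_eq_measureReal_smul_integral_cond {s : Set Ω} (hs : μ s ≠ ⊤) (f : Ω → E) :
    ∫ x in s, f x ∂μ = μ.real s • ∫ x, f x ∂μ[|s] := by
  by_cases hs₀ : μ s = 0
  · simp [Measure.restrict_eq_zero.mpr hs₀, measureReal_def, hs₀]
  · rw [ProbabilityTheory.cond, integral_smul_measure, smul_smul, ENNReal.toReal_inv,
      measureReal_def, mul_inv_cancel₀ (ENNReal.toReal_ne_zero.mpr ⟨hs₀, hs⟩), one_smul]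

theorem setIntegral_preimage_finset_eq_sum {T : Ω → ι} (S : Finset ι)
    (hT : ∀ t ∈ S, MeasurableSet (T ⁻¹' {t})) (Y : ι → Ω → E)
    (hY : ∀ t ∈ S, IntegrableOn (Y t) (T ⁻¹' {t}) μ) :
    ∫ ω in T ⁻¹' S, Y (T ω) ω ∂μ = ∑ t ∈ S, ∫ ω in T ⁻¹' {t}, Y t ω ∂μ := by
  have hfiber : ∀ t, Set.EqOn (fun ω => Y (T ω) ω) (Y t) (T ⁻¹' {t}) := by
    rintro t ω rfl
    rfl
  rw [← Set.biUnion_preimage_singleton, Finset.set_biUnion_coe, integral_biUnion_finset S hT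
    (fun s _ t _ hst => (Set.disjoint_singleton.mpr hst).preimage T)
    (fun t ht => (hY t ht).congr_fun (hfiber t).symm (hT t ht))]
  exact Finset.sum_congr rfl fun t ht => setIntegral_congr_fun (hT t ht) (hfiber t)

theorem integral_cond_preimage_singleton_comp {T : Ω → ι} {t : ι}
    (ht : MeasurableSet (T ⁻¹' {t})) (Y : ι → Ω → E) :
    ∫ ω, Y (T ω) ω ∂μ[|T ⁻¹' {t}] = ∫ ω, Y t ω ∂μ[|T ⁻¹' {t}] :=
  integral_congr_ae <| (ae_cond_mem ht).mono fun ω hω => congrArg (Y · ω) hω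

theorem integral_cond_preimage_finset_eq_sum [IsFiniteMeasure μ] {T : Ω → ι} (S : Finset ι)
    (hT : ∀ t ∈ S, MeasurableSet (T ⁻¹' {t})) (Y : ι → Ω → E)
    (hY : ∀ t ∈ S, IntegrableOn (Y t) (T ⁻¹' {t}) μ) :
    ∫ ω, Y (T ω) ω ∂μ[|T ⁻¹' S] =
      (μ.real (T ⁻¹' S))⁻¹ • ∑ t ∈ S, μ.real (T ⁻¹' {t}) • ∫ ω, Y t ω ∂μ[|T ⁻¹' {t}] := by
  by_cases hS : μ (T ⁻¹' S) = 0
  · simp [cond_eq_zero_of_meas_eq_zero hS, measureReal_def, hS]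
  · have hS' : μ.real (T ⁻¹' S) ≠ 0 := ENNReal.toReal_ne_zero.mpr ⟨hS, measure_ne_top μ _⟩
    rw [eq_inv_smul_iff₀ hS', ← setIntegral_eq_measureReal_smul_integral_cond (measure_ne_top μ _),
      setIntegral_preimage_finset_eq_sum S hT Y hY]
    exact Finset.sum_congr rfl fun t _ =>
      setIntegral_eq_measureReal_smul_integral_cond (measure_ne_top μ _) _

theorem integral_cond_preimage_finset_eq_weighted_mean [IsFiniteMeasure μ] {T : Ω → ι}
    (S : Finset ι) (hT : ∀ t ∈ S, MeasurableSet (T ⁻¹' {t})) (Y : ι → Ω → ℝ)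
    (hY : ∀ t ∈ S, Integrable (Y t) μ) (m : ι → ℝ)
    (hm : ∀ t ∈ S, ∫ ω, Y t ω ∂μ[|T ⁻¹' {t}] = m t) :
    ∫ ω, Y (T ω) ω ∂μ[|T ⁻¹' S] =
      (∑ s ∈ S, μ.real (T ⁻¹' {s}))⁻¹ * ∑ t ∈ S, μ.real (T ⁻¹' {t}) * m t := by
  rw [integral_cond_preimage_finset_eq_sum S hT Y fun t ht => (hY t ht).integrableOn,
    sum_measureReal_preimage_singleton S hT, smul_eq_mul]
  exact congrArg _ (Finset.sum_congr rfl fun t ht => by rw [hm t ht, smul_eq_mul])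

end

theorem Finset.sum_mul_add_sum_sub_mul {ι R : Type*} [CommRing R] (S : Finset ι) (p q x : ι → R) :
    ∑ t ∈ S, p t * x t + ∑ t ∈ S, (q t - p t) * x t = ∑ t ∈ S, q t * x t := by
  rw [← Finset.sum_add_distrib]
  exact Finset.sum_congr rfl fun t _ => by ring

theorem Finset.sum_div_sum_mul_sub {ι : Type*} {S : Finset ι} {w : ι → ℝ}
    (hw : ∑ s ∈ S, w s ≠ 0) (x : ι → ℝ) (c : ℝ) :
    ∑ t ∈ S, w t / (∑ s ∈ S, w s) * (x t - c) = (∑ s ∈ S, w s)⁻¹ * ∑ t ∈ S, w t * x t - c := by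
  have hnormalized : ∑ t ∈ S, w t / ∑ s ∈ S, w s = 1 := by rw [← Finset.sum_div, div_self hw]
  calc _ = ∑ t ∈ S, ((∑ s ∈ S, w s)⁻¹ * (w t * x t) - w t / (∑ s ∈ S, w s) * c) :=
        Finset.sum_congr rfl fun t _ => by ring
    _ = _ := by
      rw [Finset.sum_sub_distrib, ← Finset.mul_sum, ← Finset.sum_mul, hnormalized, one_mul]

theorem contrast_decomposes_into_rATE_plus_Delta_general
    {Ω : Type*} [MeasurableSpace Ω] (P : Measure Ω) [IsProbabilityMeasure P]
    (J : ℕ) (hJ : 1 ≤ J)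
    (T : Ω → ℕ) (hT : Measurable T) (hTle : ∀ ω, T ω ≤ J)
    (Y : ℕ → Ω → ℝ) (hYint : ∀ t, Integrable (Y t) P)
    (A : Set Ω) (hA : MeasurableSet A)
    (hpos : ∀ t ≤ J, 0 < P (A ∩ {ω | T ω = t}))
    (Yobs : Ω → ℝ)
    (hYobs : ∀ ω, Yobs ω = ∑ t ∈ Finset.range (J + 1), if T ω = t then Y t ω else 0)
    (e : ℕ → ℝ) (he : ∀ t, e t = ((P[|A]) {ω | T ω = t}).toReal)
    (m : ℕ → ℝ)
    (μbar : ℕ → ℝ)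
    (hμbar : ∀ t, μbar t = ∫ ω, Y t ω ∂(P[|(A ∩ {ω | T ω = t})]))
    (hunconf : ∀ t ≤ J, μbar t = m t)
    (πv : ℕ → ℝ) :
    (∫ ω, Yobs ω ∂(P[|(A ∩ {ω | T ω ≠ 0})])) - (∫ ω, Yobs ω ∂(P[|(A ∩ {ω | T ω = 0})]))
      = (∑ t ∈ Finset.Icc 1 J, (πv t / (∑ s ∈ Finset.Icc 1 J, πv s)) * (m t - m 0))
        + (∑ t ∈ Finset.Icc 1 J,
            (e t / (∑ s ∈ Finset.Icc 1 J, e s) - πv t / (∑ s ∈ Finset.Icc 1 J, πv s))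
              * (m t - m 0)) := by
  set ν := P[|A]
  have hcond : ∀ B, MeasurableSet B → P[|A ∩ B] = ν[|B] := fun B hB =>
    (cond_cond_eq_cond_inter hA hB P).symm
  have hfiber : ∀ t, MeasurableSet (T ⁻¹' {t}) := fun t => hT (measurableSet_singleton t)
  have hYobs_eq : ∀ ω, Yobs ω = Y (T ω) ω := fun ω => by simp [hYobs, hTle ω]
  have hunconfν : ∀ t ≤ J, ∫ ω, Y t ω ∂ν[|T ⁻¹' {t}] = m t := fun t ht => by
    rw [← hcond _ (hfiber t), ← hunconf t ht, hμbar]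
    rfl
  have hsum_e_pos : 0 < ∑ t ∈ Finset.Icc 1 J, e t := by
    refine Finset.sum_pos' (fun t _ => he t ▸ ENNReal.toReal_nonneg) ⟨1, by simp [hJ], ?_⟩
    rw [he]
    exact ENNReal.toReal_pos (cond_pos_of_inter_ne_zero hA (hpos 1 hJ).ne').ne' (measure_ne_top _ _)
  have htreated : ∫ ω, Yobs ω ∂P[|A ∩ {ω | T ω ≠ 0}] =
      (∑ s ∈ Finset.Icc 1 J, e s)⁻¹ * ∑ t ∈ Finset.Icc 1 J, e t * m t := by
    have hD : {ω | T ω ≠ 0} = T ⁻¹' ↑(Finset.Icc 1 J) := by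
      ext ω
      simp [Nat.one_le_iff_ne_zero, hTle ω]
    simp_rw [hYobs_eq, hD, hcond _ (hT (Finset.measurableSet _)), he]
    exact integral_cond_preimage_finset_eq_weighted_mean _ (fun t _ => hfiber t) Y
      (fun t _ => (hYint t).cond A) m fun t ht => hunconfν t (Finset.mem_Icc.mp ht).2
  have hcontrol : ∫ ω, Yobs ω ∂P[|A ∩ {ω | T ω = 0}] = m 0 := by
    simp_rw [hYobs_eq]
    rw [hcond {ω | T ω = 0} (hfiber 0)]
    exact (integral_cond_preimage_singleton_comp (hfiber 0) Y).trans (hunconfν 0 (Nat.zero_le J))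
  rw [htreated, hcontrol, Finset.sum_mul_add_sum_sub_mul, Finset.sum_div_sum_mul_sub hsum_e_pos.ne']

/-- Under unconfoundedness at every `t ∈ {0,…,J}`, and for positive weights
`π_1,…,π_J`, the conditional contrast `τ = E[Y | A ∩ {D=1}] − E[Y | A ∩ {D=0}]`
decomposes exactly as `τ = rATE + Δ`. -/
theorem contrast_decomposes_into_rATE_plus_Delta
    {Ω : Type*} [MeasurableSpace Ω] (P : Measure Ω) [IsProbabilityMeasure P]
    (J : ℕ) (hJ : 1 ≤ J)
    (T : Ω → ℕ) (hT : Measurable T) (hTle : ∀ ω, T ω ≤ J)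
    (Y : ℕ → Ω → ℝ) (hYmeas : ∀ t, Measurable (Y t)) (hYint : ∀ t, Integrable (Y t) P)
    (A : Set Ω) (hA : MeasurableSet A)
    (hpos : ∀ t ≤ J, 0 < P (A ∩ {ω | T ω = t}))
    (Yobs : Ω → ℝ)
    (hYobs : ∀ ω, Yobs ω = ∑ t ∈ Finset.range (J + 1), if T ω = t then Y t ω else 0)
    (e : ℕ → ℝ) (he : ∀ t, e t = ((P[|A]) {ω | T ω = t}).toReal)
    (m : ℕ → ℝ) (hm : ∀ t, m t = ∫ ω, Y t ω ∂(P[|A]))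
    (μbar : ℕ → ℝ)
    (hμbar : ∀ t, μbar t = ∫ ω, Y t ω ∂(P[|(A ∩ {ω | T ω = t})]))
    (hunconf : ∀ t ≤ J, μbar t = m t)
    (πv : ℕ → ℝ) (hπpos : ∀ t ∈ Finset.Icc 1 J, 0 < πv t) :
    (∫ ω, Yobs ω ∂(P[|(A ∩ {ω | T ω ≠ 0})])) - (∫ ω, Yobs ω ∂(P[|(A ∩ {ω | T ω = 0})]))
      = (∑ t ∈ Finset.Icc 1 J, (πv t / (∑ s ∈ Finset.Icc 1 J, πv s)) * (m t - m 0))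
        + (∑ t ∈ Finset.Icc 1 J,
            (e t / (∑ s ∈ Finset.Icc 1 J, e s) - πv t / (∑ s ∈ Finset.Icc 1 J, πv s))
              * (m t - m 0)) :=
  contrast_decomposes_into_rATE_plus_Delta_general P J hJ T hT hTle Y hYint A hA hpos Yobs hYobs e
    he m μbar hμbar hunconf πv
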